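/- arXiv:1409.2605 — 4 statements merged into one kernel-verified Lean document; each statement's English description precedes it below -/
import Mathlib

section
/- Let E ⊆ ℝ^d be open and f : E → ℝ be monotone with respect to the coordinatewise order. If for every x ∈ E the function ε ↦ f(x + ε·1) is continuous at 0 (where defined), then f is continuous on E. -/
theorem stmt2 (d : ℕ) (E : Set (Fin d → ℝ)) (hE : IsOpen E)
    (f : (Fin d → ℝ) → ℝ)
    (hmono : ∀ a ∈ E, ∀ b ∈ E, a ≤ b → f a ≤ f b)
    (hdiag : ∀ x ∈ E, ContinuousWithinAt (fun ε : ℝ => f (x + ε • (1 : Fin d → ℝ)))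
      {ε : ℝ | x + ε • (1 : Fin d → ℝ) ∈ E} 0) :
    ContinuousOn f E := by
  intro x hx
  rw [Metric.continuousWithinAt_iff]
  intro η hη
  have hd := hdiag x hx
  rw [Metric.continuousWithinAt_iff] at hd
  obtain ⟨δ₀, hδ₀, hdd⟩ := hd η hη
  obtain ⟨r, hr, hball⟩ := Metric.isOpen_iff.mp hE x hx
  set ε₀ : ℝ := min δ₀ r / 2 with hε₀def
  have hε₀ : 0 < ε₀ := by positivity
  have hmem : ∀ ε : ℝ, |ε| ≤ ε₀ → x + ε • (1 : Fin d → ℝ) ∈ E := by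
    intro ε hε
    apply hball
    rw [Metric.mem_ball]
    have : dist (x + ε • (1 : Fin d → ℝ)) x ≤ |ε| := by
      rw [dist_pi_le_iff (abs_nonneg ε)]
      intro i
      simp [Real.dist_eq]
    calc dist (x + ε • (1 : Fin d → ℝ)) x ≤ |ε| := this
      _ ≤ ε₀ := hε
      _ < r := by
        rw [hε₀def]
        have := min_le_right δ₀ r
        linarith
  have hclose : ∀ ε : ℝ, |ε| ≤ ε₀ → |f (x + ε • (1 : Fin d → ℝ)) - f x| < η := by
    intro ε hε
    have h1 : dist ε 0 < δ₀ := by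
      rw [Real.dist_eq, sub_zero]
      have := min_le_left δ₀ r
      rw [hε₀def] at hε
      linarith
    have h2 := hdd (hmem ε hε) h1
    simpa [Real.dist_eq] using h2
  refine ⟨ε₀, hε₀, fun y hy hyx => ?_⟩
  have habs : |(-ε₀ : ℝ)| ≤ ε₀ := by rw [abs_neg, abs_of_pos hε₀]
  have habs' : |(ε₀ : ℝ)| ≤ ε₀ := by rw [abs_of_pos hε₀]
  have hup : y ≤ x + ε₀ • (1 : Fin d → ℝ) := by
    intro i
    have := (dist_le_pi_dist y x i).trans_lt hyx
    rw [Real.dist_eq] at this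
    have := abs_lt.mp this
    simp only [Pi.add_apply, Pi.smul_apply, Pi.one_apply, smul_eq_mul, mul_one]
    linarith [this.2]
  have hdn : x + (-ε₀) • (1 : Fin d → ℝ) ≤ y := by
    intro i
    have := (dist_le_pi_dist y x i).trans_lt hyx
    rw [Real.dist_eq] at this
    have := abs_lt.mp this
    simp only [Pi.add_apply, Pi.smul_apply, Pi.one_apply, smul_eq_mul, mul_one]
    linarith [this.1]
  have h1 := hmono _ (hmem _ habs) y hy hdn
  have h2 := hmono y hy _ (hmem _ habs') hup
  have c1 := hclose _ habs
  have c2 := hclose _ habs'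
  rw [Real.dist_eq]
  rw [abs_lt] at c1 c2 ⊢
  constructor <;> linarith [c1.1, c1.2, c2.1, c2.2]
end

section
/- Let f be a bounded measurable function on a neighborhood of the cube K̂ = {a : ‖a - x‖_∞ ≤ δ} ⊂ ℝ^d, monotone with respect to the coordinatewise order. For ε > 0 define the measure ρ_ε = ε^{-1}(f(· + ε·1) - f(·)) dμ on K̂. Then the total variation of ρ_ε is bounded uniformly in ε: |ρ_ε|(K̂) ≤ C · max(|f(x + (ε+δ)·1)|, |f(x - δ·1)|) · δ^{d-1} for a constant C depending only on d. -/
/-!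
Monotonicity makes the increment `f (y + ε • 1) - f y` nonnegative, so the absolute value can be
dropped, and after translating the first term the integral over the cube `K` becomes
`∫_{K + ε • 1} f - ∫_K f`. This only sees `f` on the symmetric difference of `K` and its translate,
where `|f|` is bounded by its values at the two extreme corners, and that symmetric difference has
volume at most `2 d (2δ)^(d-1) ε`.
-/

open MeasureTheory Set
open scoped symmDiff

theorem norm_setIntegral_sub_setIntegral_le_mul_measureReal_symmDiff
    {X E : Type*} [MeasurableSpace X] [NormedAddCommGroup E] [NormedSpace ℝ E]
    {μ : Measure X} {f : X → E} {s t : Set X} {M : ℝ}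
    (hs : MeasurableSet s) (ht : MeasurableSet t) (hμs : μ s < ⊤) (hμt : μ t < ⊤)
    (hf : AEStronglyMeasurable f μ) (hM : ∀ y ∈ s ∪ t, ‖f y‖ ≤ M) :
    ‖∫ y in t, f y ∂μ - ∫ y in s, f y ∂μ‖ ≤ M * μ.real (s ∆ t) := by
  have hfs : IntegrableOn f s μ :=
    .of_bound hμs hf.restrict M (ae_restrict_of_forall_mem hs fun y hy => hM y (.inl hy))
  have hft : IntegrableOn f t μ :=
    .of_bound hμt hf.restrict M (ae_restrict_of_forall_mem ht fun y hy => hM y (.inr hy))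
  have hsplit : ∫ y in t, f y ∂μ - ∫ y in s, f y ∂μ
      = ∫ y in t \ s, f y ∂μ - ∫ y in s \ t, f y ∂μ := by
    rw [← integral_inter_add_sdiff hs hft, ← integral_inter_add_sdiff ht hfs, inter_comm]
    abel
  rw [hsplit, measureReal_symmDiff_eq hs ht hμs.ne hμt.ne, mul_add, add_comm (M * _)]
  refine (norm_sub_le _ _).trans (add_le_add ?_ ?_)
  · exact norm_setIntegral_le_of_norm_le_const ((measure_mono sdiff_subset).trans_lt hμt)
      fun y hy => hM y (.inr hy.1)
  · exact norm_setIntegral_le_of_norm_le_const ((measure_mono sdiff_subset).trans_lt hμs)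
      fun y hy => hM y (.inl hy.1)

theorem MonotoneOn.abs_le_max_abs_Icc {α : Type*} [Preorder α] {f : α → ℝ} {a b y : α}
    (hf : MonotoneOn f (Icc a b)) (hy : y ∈ Icc a b) : |f y| ≤ max |f b| |f a| :=
  (abs_le_max_abs_abs (hf (left_mem_Icc.2 (hy.1.trans hy.2)) hy hy.1)
    (hf hy (right_mem_Icc.2 (hy.1.trans hy.2)) hy.2)).trans_eq (max_comm _ _)

theorem pow_sub_max_sub_pow_le {a ε : ℝ} (ha : 0 ≤ a) (hε : 0 ≤ ε) (n : ℕ) :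
    a ^ n - max (a - ε) 0 ^ n ≤ n * a ^ (n - 1) * ε := by
  have hm : |max (a - ε) 0| ≤ |a| := by
    rw [abs_of_nonneg ha, abs_of_nonneg (le_max_right _ _)]
    exact max_le (by linarith) ha
  have hgap : |a - max (a - ε) 0| ≤ ε := by
    rw [abs_of_nonneg (sub_nonneg.2 (max_le (by linarith) ha))]
    linarith [le_max_left (a - ε) 0]
  calc a ^ n - max (a - ε) 0 ^ n
      ≤ |a - max (a - ε) 0| * n * max |a| |max (a - ε) 0| ^ (n - 1) :=
        (le_abs_self _).trans (abs_pow_sub_pow_le ..)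
    _ ≤ ε * n * a ^ (n - 1) := by
        rw [max_eq_left hm, abs_of_nonneg ha]
        gcongr
    _ = n * a ^ (n - 1) * ε := by ring

section Cube

variable {ι : Type*}

theorem Icc_inter_Icc_add_smul_one (x : ι → ℝ) {r ε : ℝ} (hε : 0 ≤ ε) :
    Icc (x - r • 1) (x + r • 1) ∩ Icc (x - r • 1 + ε • 1) (x + r • 1 + ε • 1)
      = Icc (x - r • 1 + ε • 1) (x + r • 1) := by
  have hc : (0 : ι → ℝ) ≤ ε • 1 := smul_nonneg hε zero_le_one
  rw [Icc_inter_Icc, sup_eq_right.2 (le_add_of_nonneg_right hc),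
    inf_eq_left.2 (le_add_of_nonneg_right hc)]

variable [Fintype ι]

theorem Pi.closedBall_eq_Icc (x : ι → ℝ) {r : ℝ} (hr : 0 ≤ r) :
    Metric.closedBall x r = Icc (x - r • 1) (x + r • 1) := by
  rw [closedBall_pi _ hr, ← pi_univ_Icc]
  simp [Real.closedBall_eq_Icc]

theorem Real.volume_real_Icc_pi_of_forall_sub_eq {a b : ι → ℝ} {ℓ : ℝ}
    (h : ∀ i, b i - a i = ℓ) : volume.real (Icc a b) = max ℓ 0 ^ Fintype.card ι := by
  simp [measureReal_def, Real.volume_Icc_pi, h, ENNReal.toReal_ofReal']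

theorem Real.volume_real_symmDiff_Icc_add_smul_one_le (x : ι → ℝ) {r ε : ℝ}
    (hr : 0 ≤ r) (hε : 0 ≤ ε) :
    volume.real (Icc (x - r • 1) (x + r • 1) ∆ Icc (x - r • 1 + ε • 1) (x + r • 1 + ε • 1))
      ≤ 2 * Fintype.card ι * (2 * r) ^ (Fintype.card ι - 1) * ε := by
  set n := Fintype.card ι
  set K := Icc (x - r • 1) (x + r • 1)
  set K' := Icc (x - r • 1 + ε • 1) (x + r • 1 + ε • 1)
  have hK : volume.real K = (2 * r) ^ n := by
    rw [Real.volume_real_Icc_pi_of_forall_sub_eq (ℓ := 2 * r) fun i => by simp; ring,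
      max_eq_left (by positivity)]
  have hK' : volume.real K' = (2 * r) ^ n := by
    rw [Real.volume_real_Icc_pi_of_forall_sub_eq (ℓ := 2 * r) fun i => by simp; ring,
      max_eq_left (by positivity)]
  have hKK' : volume.real (K ∩ K') = max (2 * r - ε) 0 ^ n := by
    rw [Icc_inter_Icc_add_smul_one x hε]
    exact Real.volume_real_Icc_pi_of_forall_sub_eq (ℓ := 2 * r - ε) fun i => by simp; ring
  have hKm : MeasurableSet K := measurableSet_Icc
  have hK'm : MeasurableSet K' := measurableSet_Icc
  have hKf : volume K ≠ ⊤ := isCompact_Icc.measure_lt_top.ne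
  have hK'f : volume K' ≠ ⊤ := isCompact_Icc.measure_lt_top.ne
  have hK_sdiff := measureReal_sdiff_add_inter hK'm hKf
  have hK'_sdiff := measureReal_sdiff_add_inter hKm hK'f
  rw [inter_comm] at hK'_sdiff
  rw [measureReal_symmDiff_eq hKm hK'm hKf hK'f]
  have := pow_sub_max_sub_pow_le (by positivity : 0 ≤ 2 * r) hε n
  linarith

theorem setIntegral_comp_add_right_Icc {E : Type*} [NormedAddCommGroup E] [NormedSpace ℝ E]
    (f : (ι → ℝ) → E) (a b c : ι → ℝ) :
    ∫ y in Icc a b, f (y + c) = ∫ y in Icc (a + c) (b + c), f y := by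
  have := (measurePreserving_add_right volume c).setIntegral_preimage_emb
    (measurableEmbedding_addRight c) f (Icc (a + c) (b + c))
  rwa [preimage_add_const_Icc, add_sub_cancel_right, add_sub_cancel_right] at this

theorem MonotoneOn.setIntegral_abs_sub_comp_add_smul_one_div_le {f : (ι → ℝ) → ℝ}
    (x : ι → ℝ) {r ε : ℝ} (hr : 0 ≤ r) (hε : 0 < ε) (hf : Measurable f)
    (hmono : MonotoneOn f (Icc (x - r • 1) (x + r • 1 + ε • 1))) :
    ∫ y in Icc (x - r • 1) (x + r • 1), |f (y + ε • 1) - f y| / ε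
      ≤ 2 * Fintype.card ι * (2 * r) ^ (Fintype.card ι - 1) *
        max |f (x + r • 1 + ε • 1)| |f (x - r • 1)| := by
  set M := max |f (x + r • 1 + ε • 1)| |f (x - r • 1)|
  set c : ι → ℝ := ε • 1
  set K := Icc (x - r • 1) (x + r • 1)
  set K' := Icc (x - r • 1 + c) (x + r • 1 + c)
  have hc : 0 ≤ c := smul_nonneg hε.le zero_le_one
  have hKL : K ⊆ Icc (x - r • 1) (x + r • 1 + c) :=
    Icc_subset_Icc le_rfl (le_add_of_nonneg_right hc)
  have hK'L : K' ⊆ Icc (x - r • 1) (x + r • 1 + c) :=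
    Icc_subset_Icc (le_add_of_nonneg_right hc) le_rfl
  have hshift : ∀ y ∈ K, y + c ∈ K' := fun y hy =>
    ⟨add_le_add hy.1 le_rfl, add_le_add hy.2 le_rfl⟩
  have hinc : ∀ y ∈ K, 0 ≤ f (y + c) - f y := fun y hy =>
    sub_nonneg.2 (hmono (hKL hy) (hK'L (hshift y hy)) (le_add_of_nonneg_right hc))
  have hintegrable : ∀ g : (ι → ℝ) → ℝ, Measurable g → (∀ y ∈ K, |g y| ≤ M) →
      IntegrableOn g K := fun g hg hgM =>
    .of_bound isCompact_Icc.measure_lt_top hg.aestronglyMeasurable.restrict M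
      (ae_restrict_of_forall_mem measurableSet_Icc hgM)
  calc ∫ y in K, |f (y + c) - f y| / ε
      = ((∫ y in K', f y) - ∫ y in K, f y) / ε := by
        rw [integral_div, setIntegral_congr_fun measurableSet_Icc
          fun y hy => abs_of_nonneg (hinc y hy), integral_sub
          (hintegrable (fun y => f (y + c)) (hf.comp (measurable_add_const c))
            fun y hy => hmono.abs_le_max_abs_Icc (hK'L (hshift y hy)))
          (hintegrable f hf fun y hy => hmono.abs_le_max_abs_Icc (hKL hy)),
          setIntegral_comp_add_right_Icc]
    _ ≤ M * volume.real (K ∆ K') / ε := by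
        gcongr
        exact (Real.le_norm_self _).trans
          (norm_setIntegral_sub_setIntegral_le_mul_measureReal_symmDiff measurableSet_Icc
            measurableSet_Icc isCompact_Icc.measure_lt_top isCompact_Icc.measure_lt_top
            hf.aestronglyMeasurable fun y hy => hmono.abs_le_max_abs_Icc
              (hy.elim (hKL ·) (hK'L ·)))
    _ ≤ M * (2 * Fintype.card ι * (2 * r) ^ (Fintype.card ι - 1) * ε) / ε := by
        gcongr
        exact Real.volume_real_symmDiff_Icc_add_smul_one_le x hr hε.le
    _ = 2 * Fintype.card ι * (2 * r) ^ (Fintype.card ι - 1) * M := by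
        field_simp

end Cube

theorem stmt6 (d : ℕ) :
    ∃ C : ℝ, 0 < C ∧
      ∀ (U : Set (Fin d → ℝ)) (_ : IsOpen U) (x : Fin d → ℝ) (δ ε : ℝ), 0 < δ → 0 < ε →
        Metric.closedBall x (δ + ε) ⊆ U →
        ∀ f : (Fin d → ℝ) → ℝ, Measurable f → (∃ M, ∀ y ∈ U, |f y| ≤ M) →
          (∀ a ∈ U, ∀ b ∈ U, a ≤ b → f a ≤ f b) →
          (∫ y in Metric.closedBall x δ,
              |f (y + ε • (1 : Fin d → ℝ)) - f y| / ε) ≤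
            C * max |f (x + (ε + δ) • (1 : Fin d → ℝ))| |f (x - δ • (1 : Fin d → ℝ))| *
              δ ^ (d - 1) := by
  refine ⟨d * 2 ^ d + 1, by positivity, ?_⟩
  intro U _ x δ ε hδ hε hU f hf _ hmono
  have htop : x + δ • 1 + ε • 1 = x + (ε + δ) • (1 : Fin d → ℝ) := by module
  have hcube : Icc (x - δ • 1) (x + δ • 1 + ε • 1) ⊆ U := by
    rw [Pi.closedBall_eq_Icc x (by positivity)] at hU
    refine (Icc_subset_Icc ?_ ?_).trans hU <;> intro i <;> simp <;> linarith
  have hconst : 2 * d * (2 * δ) ^ (d - 1) = (d * 2 ^ d : ℝ) * δ ^ (d - 1) := by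
    rcases d with _ | d
    · simp
    · rw [Nat.add_sub_cancel, mul_pow, pow_succ']
      ring
  calc ∫ y in Metric.closedBall x δ, |f (y + ε • 1) - f y| / ε
      ≤ 2 * d * (2 * δ) ^ (d - 1) * max |f (x + (ε + δ) • 1)| |f (x - δ • 1)| := by
        rw [Pi.closedBall_eq_Icc x hδ.le, ← htop]
        simpa only [Fintype.card_fin] using
          MonotoneOn.setIntegral_abs_sub_comp_add_smul_one_div_le x hδ.le hε hf
            fun a ha b hb => hmono a (hcube ha) b (hcube hb)
    _ ≤ (d * 2 ^ d + 1) * max |f (x + (ε + δ) • 1)| |f (x - δ • 1)| * δ ^ (d - 1) := by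
        rw [hconst, mul_right_comm]
        gcongr
        linarith
end

section
/- Let f : ℝ^d ⊇ E → ℝ be monotone in the coordinatewise order and continuous, and suppose ε ↦ f(x + ε·1) is differentiable at ε = 0 μ-a.e. x with locally integrable derivative g. If f_t = φ_t * f are smooth mollifications (mollifier φ_t supported in radius t), then the directional derivatives f_t'(x)[1] = (d/ds)|_{s=0} f_t(x + s·1) satisfy f_t'(x)[1] = (φ_t * ρ)(x), where ρ is the weak-* limit of the measures ε^{-1}(f(·+ε·1) − f(·)) dμ as ε → 0. -/
open MeasureTheory

theorem stmt9 (d : ℕ) (f : (Fin d → ℝ) → ℝ)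
    (hmono : Monotone f) (hcont : Continuous f) (hbd : ∃ M, ∀ y, |f y| ≤ M)
    (g : (Fin d → ℝ) → ℝ) (hg : LocallyIntegrable g)
    (hdiff : ∀ᵐ x : Fin d → ℝ,
      HasDerivAt (fun ε : ℝ => f (x + ε • (1 : Fin d → ℝ))) (g x) 0)
    (ρ : Measure (Fin d → ℝ)) [IsLocallyFiniteMeasure ρ]
    (hweak : ∀ h : (Fin d → ℝ) → ℝ, Continuous h → HasCompactSupport h →
      Filter.Tendsto
        (fun ε : ℝ => ∫ y, h y * ((f (y + ε • (1 : Fin d → ℝ)) - f y) / ε))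
        (nhdsWithin 0 (Set.Ioi 0)) (nhds (∫ y, h y ∂ρ)))
    (φ : (Fin d → ℝ) → ℝ) (hφs : ContDiff ℝ (⊤ : ℕ∞) φ) (hφc : HasCompactSupport φ)
    (hφ0 : ∀ y, 0 ≤ φ y) (hφ1 : ∫ y, φ y = 1)
    (t : ℝ) (ht : 0 < t) (x : Fin d → ℝ) :
    deriv (fun s : ℝ =>
        ∫ ξ, (t ^ (-(d : ℤ)) * φ (t⁻¹ • ξ)) * f (x + s • (1 : Fin d → ℝ) - ξ)) 0 =
      ∫ ξ, t ^ (-(d : ℤ)) * φ (t⁻¹ • (x - ξ)) ∂ρ := by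
  set φt : (Fin d → ℝ) → ℝ := fun ξ => t ^ (-(d : ℤ)) * φ (t⁻¹ • ξ) with hφt
  have htinv : (t : ℝ)⁻¹ ≠ 0 := inv_ne_zero ht.ne'
  -- φt is smooth and compactly supported
  have hcomp : ContDiff ℝ (⊤ : ℕ∞) fun ξ : Fin d → ℝ => φ (t⁻¹ • ξ) :=
    hφs.comp (contDiff_const_smul t⁻¹)
  have hφts : ContDiff ℝ (⊤ : ℕ∞) φt := by
    simpa [φt, smul_eq_mul] using hcomp.const_smul (t ^ (-(d : ℤ)) : ℝ)
  have hφtc : HasCompactSupport φt := by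
    have h1 : HasCompactSupport fun ξ : Fin d → ℝ => φ (t⁻¹ • ξ) :=
      hφc.comp_smul htinv
    exact h1.mul_left
  have hφtcont : Continuous φt := hφts.continuous
  have hfLI : LocallyIntegrable f := hcont.locallyIntegrable
  -- the mollified function is the convolution
  set G : (Fin d → ℝ) → ℝ := convolution φt f (ContinuousLinearMap.mul ℝ ℝ) volume with hG
  have hGsmooth : ContDiff ℝ (↑(⊤ : ℕ∞)) G :=
    hφtc.contDiff_convolution_left _ (hφts.of_le (by simp)) hfLI
  set F : ℝ → ℝ := fun s : ℝ =>
    ∫ ξ, (t ^ (-(d : ℤ)) * φ (t⁻¹ • ξ)) * f (x + s • (1 : Fin d → ℝ) - ξ) with hF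
  have hFG : F = fun s : ℝ => G (x + s • (1 : Fin d → ℝ)) := by
    funext s
    simp [F, G, convolution_def, φt]
  -- F has a (two-sided) derivative at 0
  have hx0 : x + (0 : ℝ) • (1 : Fin d → ℝ) = x := by simp
  have hL : HasDerivAt (fun s : ℝ => x + s • (1 : Fin d → ℝ)) (1 : Fin d → ℝ) 0 := by
    simpa using ((hasDerivAt_id (0 : ℝ)).smul_const (1 : Fin d → ℝ)).const_add x
  have hGx : HasFDerivAt G (fderiv ℝ G x) ((fun s : ℝ => x + s • (1 : Fin d → ℝ)) 0) := by
    rw [show (fun s : ℝ => x + s • (1 : Fin d → ℝ)) 0 = x from hx0]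
    exact (hGsmooth.differentiable (by simp) x).hasFDerivAt
  set c : ℝ := fderiv ℝ G x (1 : Fin d → ℝ) with hc
  have hFd : HasDerivAt F c 0 := by
    rw [hFG]
    exact hGx.comp_hasDerivAt 0 hL
  -- the right-sided difference quotients of F
  have hslope : Filter.Tendsto (slope F 0) (nhdsWithin 0 (Set.Ioi 0)) (nhds c) :=
    (hasDerivAt_iff_tendsto_slope.mp hFd).mono_left
      (nhdsWithin_mono _ (fun y hy => ne_of_gt hy))
  -- the test function h
  set h : (Fin d → ℝ) → ℝ := fun y => φt (x - y) with hh
  have hhcont : Continuous h := hφtcont.comp (continuous_const.sub continuous_id)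
  have hhcs : HasCompactSupport h := hφtc.comp_homeomorph (Homeomorph.subLeft x)
  -- integrability of the convolution integrands
  have int1 : ∀ z : Fin d → ℝ, Integrable (fun ξ => φt ξ * f (z - ξ)) := by
    intro z
    exact (hφtcont.mul (hcont.comp (continuous_const.sub continuous_id))).integrable_of_hasCompactSupport
      hφtc.mul_right
  -- the difference quotients agree with those in hweak
  have hEq : ∀ ε : ℝ, ε ≠ 0 →
      (∫ y, h y * ((f (y + ε • (1 : Fin d → ℝ)) - f y) / ε)) = slope F 0 ε := by
    intro ε hε
    have step1 : (∫ y, h y * ((f (y + ε • (1 : Fin d → ℝ)) - f y) / ε)) =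
        ∫ ξ, φt ξ * ((f (x + ε • (1 : Fin d → ℝ) - ξ) - f (x - ξ)) / ε) := by
      rw [← integral_sub_left_eq_self
        (fun ξ => φt ξ * ((f (x + ε • (1 : Fin d → ℝ) - ξ) - f (x - ξ)) / ε)) volume x]
      congr 1
      funext y
      have e1 : x + ε • (1 : Fin d → ℝ) - (x - y) = y + ε • (1 : Fin d → ℝ) := by abel
      have e2 : x - (x - y) = y := by abel
      rw [e1, e2]
    have step2 : (∫ ξ, φt ξ * ((f (x + ε • (1 : Fin d → ℝ) - ξ) - f (x - ξ)) / ε)) =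
        ((∫ ξ, φt ξ * f (x + ε • (1 : Fin d → ℝ) - ξ)) - ∫ ξ, φt ξ * f (x - ξ)) / ε := by
      simp_rw [mul_div_assoc' (φt _), mul_sub]
      rw [integral_div, integral_sub (int1 _) (int1 _)]
    rw [step1, step2, slope_def_field]
    have : F ε = ∫ ξ, φt ξ * f (x + ε • (1 : Fin d → ℝ) - ξ) := rfl
    rw [this]
    have : F 0 = ∫ ξ, φt ξ * f (x - ξ) := by simp [F, φt]
    rw [this, sub_zero]
  -- combine
  have hweakh := hweak h hhcont hhcs
  have hweakh' : Filter.Tendsto (slope F 0) (nhdsWithin 0 (Set.Ioi 0))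
      (nhds (∫ y, h y ∂ρ)) := by
    refine hweakh.congr' ?_
    filter_upwards [self_mem_nhdsWithin] with ε hε
    exact hEq ε (ne_of_gt hε)
  have huniq : c = ∫ y, h y ∂ρ := tendsto_nhds_unique hslope hweakh'
  rw [hFd.deriv, huniq]
end

section
/- Let f : (a,b) → ℝ be matrix monotone. Then f is continuous on (a,b). -/
/-!
On `1 × 1` matrices matrix monotonicity is plain monotonicity, so `f` has one-sided limits at
every point `c` and only a jump has to be excluded. Take `A = diag (c - 5h, c + h)` and
`B = A + 2h • w wᵀ` with `w = (2, 1)`, so that `A ≤ B`. The vector `v = (1, -1)` is an eigenvector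
of `B` for `c - h`, hence `⟪v, f(A) v⟫ ≤ ⟪v, f(B) v⟫` reads `f (c + h) + f (c - 5h) ≤ 2 f (c - h)`.
Letting `h → 0⁺` gives `f (c⁺) + f (c⁻) ≤ 2 f (c⁻)`, i.e. the right limit is at most the left one.
-/

noncomputable def matrixApply {n : ℕ} (f : ℝ → ℝ) {A : Matrix (Fin n) (Fin n) ℝ}
    (hA : A.IsHermitian) : Matrix (Fin n) (Fin n) ℝ :=
  (hA.eigenvectorUnitary : Matrix (Fin n) (Fin n) ℝ) *
    Matrix.diagonal (fun i => f (hA.eigenvalues i)) *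
    star (hA.eigenvectorUnitary : Matrix (Fin n) (Fin n) ℝ)

def MatrixMonotoneOn (f : ℝ → ℝ) (a b : ℝ) : Prop :=
  ∀ (n : ℕ) (A B : Matrix (Fin n) (Fin n) ℝ) (hA : A.IsHermitian) (hB : B.IsHermitian),
    (∀ i, hA.eigenvalues i ∈ Set.Ioo a b) → (∀ i, hB.eigenvalues i ∈ Set.Ioo a b) →
    (B - A).PosSemidef → (matrixApply f hB - matrixApply f hA).PosSemidef

open Matrix Set Filter Topology Function

lemma tendsto_const_add_mul_nhdsGT_zero (c k : ℝ) :
    Tendsto (fun h => c + k * h) (𝓝[>] 0) (𝓝 c) :=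
  (Continuous.tendsto' (by fun_prop) 0 c (by simp)).mono_left nhdsWithin_le_nhds

theorem Monotone.continuousAt_of_add_le_two_mul {g : ℝ → ℝ} (hg : Monotone g) {c : ℝ}
    (h : ∀ᶠ h in 𝓝[>] 0, g (c + h) + g (c - 5 * h) ≤ 2 * g (c - h)) : ContinuousAt g c := by
  have right : Tendsto (fun h => g (c + h)) (𝓝[>] 0) (𝓝 (rightLim g c)) :=
    (hg.tendsto_rightLim c).comp <| tendsto_nhdsWithin_iff.2
      ⟨by simpa using tendsto_const_add_mul_nhdsGT_zero c 1,
        eventually_mem_nhdsWithin.mono fun h hh => lt_add_of_pos_right c hh⟩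
  have left {k : ℝ} (hk : 0 < k) : Tendsto (fun h => g (c - k * h)) (𝓝[>] 0) (𝓝 (leftLim g c)) :=
    (hg.tendsto_leftLim c).comp <| tendsto_nhdsWithin_iff.2
      ⟨by simpa [← sub_eq_add_neg] using tendsto_const_add_mul_nhdsGT_zero c (-k),
        eventually_mem_nhdsWithin.mono fun h hh => sub_lt_self c (mul_pos hk hh)⟩
  have hlim := le_of_tendsto_of_tendsto (right.add (left (k := 5) (by norm_num)))
    ((by simpa using left one_pos : Tendsto (fun h => g (c - h)) _ _).const_mul 2) h
  rw [hg.continuousAt_iff_leftLim_eq_rightLim]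
  linarith [hg.leftLim_le_rightLim (le_refl c)]

lemma MonotoneOn.exists_monotone_eventuallyEq {α β : Type*} [LinearOrder α] [TopologicalSpace α]
    [OrderTopology α] [Preorder β] {f : α → β} {s : Set α} {c : α} (hf : MonotoneOn f s)
    (hs : s ∈ 𝓝 c) : ∃ g : α → β, Monotone g ∧ g =ᶠ[𝓝 c] f := by
  obtain ⟨a, b, hc, hI, hIs⟩ := exists_Icc_mem_subset_of_mem_nhds hs
  refine ⟨IccExtend (hc.1.trans hc.2) fun x : Icc a b => f x, ?_, ?_⟩
  · exact Monotone.IccExtend _ fun x y hxy => hf (hIs x.2) (hIs y.2) hxy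
  · filter_upwards [hI] with x hx using IccExtend_of_mem _ _ hx

theorem MonotoneOn.continuousAt_of_add_le_two_mul {f : ℝ → ℝ} {s : Set ℝ} {c : ℝ}
    (hf : MonotoneOn f s) (hs : s ∈ 𝓝 c)
    (h : ∀ᶠ h in 𝓝[>] 0, f (c + h) + f (c - 5 * h) ≤ 2 * f (c - h)) : ContinuousAt f c := by
  obtain ⟨g, hg, hgf⟩ := hf.exists_monotone_eventuallyEq hs
  have near (k : ℝ) := hgf.comp_tendsto (tendsto_const_add_mul_nhdsGT_zero c k)
  refine (continuousAt_congr hgf).1 (hg.continuousAt_of_add_le_two_mul ?_)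
  filter_upwards [h, near 1, near (-5), near (-1)] with h hineq h1 h5 h1'
  simp only [Function.comp_apply, one_mul, neg_mul, ← sub_eq_add_neg] at h1 h5 h1'
  rwa [h1, h5, h1']

lemma matrixApply_mulVec_of_mulVec_eq {n : ℕ} (f : ℝ → ℝ) {A : Matrix (Fin n) (Fin n) ℝ}
    (hA : A.IsHermitian) {μ : ℝ} {v : Fin n → ℝ} (hv : A *ᵥ v = μ • v) :
    matrixApply f hA *ᵥ v = f μ • v := by
  set U : Matrix (Fin n) (Fin n) ℝ := ↑hA.eigenvectorUnitary
  have hU : U * star U = 1 := Unitary.mul_star_self_of_mem hA.eigenvectorUnitary.2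
  set w := star U *ᵥ v
  have hdiag : star U * A * U = diagonal hA.eigenvalues := by
    simpa [Unitary.conjStarAlgAut_star_apply] using hA.conjStarAlgAut_star_eigenvectorUnitary
  have hw : diagonal hA.eigenvalues *ᵥ w = μ • w := by
    rw [← hdiag, mulVec_mulVec, mul_assoc (star U * A), hU, mul_one,
      ← mulVec_mulVec, hv, mulVec_smul]
  have hfw : diagonal (fun i => f (hA.eigenvalues i)) *ᵥ w = f μ • w := by
    ext i
    have hi : hA.eigenvalues i * w i = μ * w i := by simpa [mulVec_diagonal] using congrFun hw i
    rcases eq_or_ne (w i) 0 with h | h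
    · simp [mulVec_diagonal, h]
    · simp [mulVec_diagonal, mul_right_cancel₀ h hi]
  rw [matrixApply, ← mulVec_mulVec, ← mulVec_mulVec, hfw, mulVec_smul, mulVec_mulVec,
    hU, one_mulVec]

lemma matrixApply_diagonal {n : ℕ} (f : ℝ → ℝ) (d : Fin n → ℝ) (hd : (diagonal d).IsHermitian) :
    matrixApply f hd = diagonal (f ∘ d) :=
  ext_of_mulVec_single fun j => by
    have single_smul (x : ℝ) : Pi.single j x = x • Pi.single j (1 : ℝ) := by
      ext k; simp [Pi.single_apply]
    rw [matrixApply_mulVec_of_mulVec_eq f hd (μ := d j) (by simp [single_smul (d j)]),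
      diagonal_mulVec_single, mul_one, Function.comp_apply, ← single_smul]

lemma eq_or_eq_of_mul_sub_smul_one_eq_zero {K m : Type*} [Field K] [Fintype m] [DecidableEq m]
    {A : Matrix m m K} {s t μ : K} {v : m → K} (hv0 : v ≠ 0) (hv : A *ᵥ v = μ • v)
    (hA : (A - s • 1) * (A - t • 1) = 0) : μ = s ∨ μ = t := by
  have : ((μ - s) * (μ - t)) • v = 0 := by
    have := congrArg (· *ᵥ v) hA
    simp only [← mulVec_mulVec, sub_mulVec, smul_mulVec, one_mulVec, hv, zero_mulVec] at this
    rw [← this]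
    simp only [mulVec_sub, mulVec_smul, hv]
    module
  simpa [sub_eq_zero, hv0] using this

lemma Matrix.IsHermitian.eigenvalues_mem_of_diagonal {n : ℕ} {d : Fin n → ℝ}
    (hd : (diagonal d).IsHermitian) {S : Set ℝ} (hdS : ∀ j, d j ∈ S) (i : Fin n) :
    hd.eigenvalues i ∈ S := by
  obtain ⟨j, hj⟩ : hd.eigenvalues i ∈ range d := by simpa using hd.eigenvalues_mem_spectrum_real i
  exact hj ▸ hdS j

lemma Matrix.IsHermitian.eigenvalues_mem_of_mul_sub_smul_one_eq_zero {m : Type*} [Fintype m]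
    [DecidableEq m] {A : Matrix m m ℝ} (hA : A.IsHermitian) {s t : ℝ}
    (h : (A - s • 1) * (A - t • 1) = 0) {S : Set ℝ} (hs : s ∈ S) (ht : t ∈ S) (i : m) :
    hA.eigenvalues i ∈ S := by
  have hv0 : ⇑(hA.eigenvectorBasis i) ≠ 0 := by
    simpa using hA.eigenvectorBasis.orthonormal.ne_zero i
  rcases eq_or_eq_of_mul_sub_smul_one_eq_zero hv0 (hA.mulVec_eigenvectorBasis i) h with hμ | hμ <;>
    rwa [hμ]

namespace MatrixMonotoneOn

variable {f : ℝ → ℝ} {a b : ℝ}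

theorem monotoneOn (hf : MatrixMonotoneOn f a b) : MonotoneOn f (Ioo a b) := by
  intro x hx y hy hxy
  have hA : (diagonal fun _ : Fin 1 => x).IsHermitian := isHermitian_diagonal _
  have hB : (diagonal fun _ : Fin 1 => y).IsHermitian := isHermitian_diagonal _
  have h := hf 1 _ _ hA hB (hA.eigenvalues_mem_of_diagonal fun _ => hx)
    (hB.eigenvalues_mem_of_diagonal fun _ => hy)
    (by simpa [diagonal_sub] using hxy)
  rw [matrixApply_diagonal, matrixApply_diagonal, diagonal_sub, posSemidef_diagonal_iff] at h
  simpa using h 0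

theorem add_le_two_mul (hf : MatrixMonotoneOn f a b) {c h : ℝ} (hh : 0 ≤ h)
    (hl : c - 5 * h ∈ Ioo a b) (hr : c + 7 * h ∈ Ioo a b) :
    f (c + h) + f (c - 5 * h) ≤ 2 * f (c - h) := by
  set w : Fin 2 → ℝ := ![2, 1]
  set A : Matrix (Fin 2) (Fin 2) ℝ := diagonal ![c - 5 * h, c + h]
  set B : Matrix (Fin 2) (Fin 2) ℝ := A + (2 * h) • vecMulVec w w
  have hP : ((2 * h) • vecMulVec w w).PosSemidef :=
    (posSemidef_vecMulVec_self_star w).smul (by positivity)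
  have hA : A.IsHermitian := isHermitian_diagonal _
  have hB : B.IsHermitian := hA.add hP.isHermitian
  have hcl : c - h ∈ Ioo a b := ⟨by linarith [hl.1], by linarith [hr.2]⟩
  have hcr : c + h ∈ Ioo a b := ⟨by linarith [hl.1], by linarith [hr.2]⟩
  have hAI := hA.eigenvalues_mem_of_diagonal (Fin.forall_fin_two.2 ⟨hl, hcr⟩)
  have hBq : (B - (c - h) • 1) * (B - (c + 7 * h) • 1) = 0 := by
    ext i j
    fin_cases i <;> fin_cases j <;> simp [B, A, w, mul_apply, Fin.sum_univ_two] <;> ring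
  have hBI := hB.eigenvalues_mem_of_mul_sub_smul_one_eq_zero hBq hcl hr
  have hPSD := hf 2 A B hA hB hAI hBI (by simpa [B] using hP)
  set v : Fin 2 → ℝ := ![1, -1]
  have hBv : B *ᵥ v = (c - h) • v := by
    ext i
    fin_cases i <;> simp [B, A, v, w, mulVec, dotProduct, Fin.sum_univ_two] <;> ring
  have hform := hPSD.dotProduct_mulVec_nonneg v
  rw [sub_mulVec, matrixApply_mulVec_of_mulVec_eq f hB hBv, matrixApply_diagonal] at hform
  simp only [v, dotProduct, Fin.sum_univ_two, star_trivial, Pi.sub_apply, Pi.smul_apply,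
    mulVec_diagonal, Function.comp_apply, cons_val_zero, cons_val_one, cons_val_fin_one,
    smul_eq_mul] at hform
  linarith

end MatrixMonotoneOn

theorem stmt15 (a b : ℝ) (f : ℝ → ℝ) (hf : MatrixMonotoneOn f a b) :
    ContinuousOn f (Set.Ioo a b) := by
  intro c ⟨hac, hcb⟩
  refine (hf.monotoneOn.continuousAt_of_add_le_two_mul (Ioo_mem_nhds hac hcb) ?_).continuousWithinAt
  have hδ : 0 < min (c - a) (b - c) / 7 := by simp [hac, hcb]
  filter_upwards [Ioo_mem_nhdsGT hδ] with h ⟨h0, hhδ⟩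
  have := min_le_left (c - a) (b - c)
  have := min_le_right (c - a) (b - c)
  exact hf.add_le_two_mul h0.le ⟨by linarith, by linarith⟩ ⟨by linarith, by linarith⟩
end
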